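/- Assume boldface Π¹₁-determinacy. Let (P_n)_{n<ω} be an infinite level-1 tower and let P = ∪_n P_n. Then P is Π¹₁-wellfounded if and only if there exists an order-preserving function f from (rep(P), <^P) into the countable ordinals that is continuous, i.e., f(v) = sup{f(w) : w <^P v} whenever v ∈ rep(P) has at least one <^P-predecessor but no immediate <^P-predecessor. (This is the equivalence of items (1) and (2) of Martin's theorem on infinite level-1 towers.) -/

import Mathlib

noncomputable section

/-- Brouwer–Kleene strict order on finite sequences, relative to a strict order `lt`
on entries: `s <_BK t` iff `s` properly extends `t`, or at the least position where
both are defined and they differ, the entry of `s` is smaller; `[]` is greatest. -/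
def BKltBy {α : Type*} (lt : α → α → Prop) : List α → List α → Prop
  | [], _ => False
  | _ :: _, [] => True
  | a :: s, b :: t => lt a b ∨ (a = b ∧ BKltBy lt s t)

/-- The Brouwer–Kleene order on finite sequences of natural numbers. -/
def BKlt : List ℕ → List ℕ → Prop := BKltBy (· < ·)

/-- A level-1 tree: a set of nonempty finite sequences of naturals such that whenever
`s⌢(n) ∈ P`: if `s ≠ []` then `s ∈ P`, and `s⌢(m) ∈ P` for every `m < n`. -/
def IsLevel1Tree (P : Set (List ℕ)) : Prop :=
  (∀ s ∈ P, s ≠ []) ∧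
  ∀ (s : List ℕ) (n : ℕ), s ++ [n] ∈ P →
    (s ≠ [] → s ∈ P) ∧ ∀ m < n, s ++ [m] ∈ P

/-- A level-1 tree is regular iff the sequence `(1)` is not in it. -/
def Regular1 (P : Set (List ℕ)) : Prop := ([1] : List ℕ) ∉ P

/-- `P` is Π¹₁-wellfounded: there is no infinite branch through `P`. -/
def Pi11WF (P : Set (List ℕ)) : Prop :=
  ¬ ∃ x : ℕ → ℕ, ∀ n : ℕ, 0 < n → (List.ofFn fun i : Fin n => x i) ∈ P

/-- `rep(P)`: the pair `(p, none)` codes the element `(p)` and `(p, some n)` codes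
`(p, n)`. -/
def Rep1 (P : Set (List ℕ)) : Set (List ℕ × Option ℕ) := {x | x.1 ∈ P}

def optNatLt : Option ℕ → Option ℕ → Prop
  | some n, some m => n < m
  | some _, none => True
  | _, _ => False

/-- The order `<^P` on `rep(P)`. -/
def Rep1lt (x y : List ℕ × Option ℕ) : Prop :=
  BKlt x.1 y.1 ∨ (x.1 = y.1 ∧ optNatLt x.2 y.2)

/-- The first uncountable ordinal. -/
def omega1 : Ordinal := (Cardinal.aleph 1).ord

/-- The tuple `(f p)_{p ∈ P}` respects the level-1 tree `P`: each entry is a countable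
limit ordinal and `p ↦ f p` is order preserving from `(P, <_BK)` to the ordinals. -/
def Respects1 (P : Set (List ℕ)) (f : List ℕ → Ordinal) : Prop :=
  (∀ p ∈ P, f p < omega1 ∧ Order.IsSuccLimit (f p)) ∧
  ∀ p ∈ P, ∀ q ∈ P, BKlt p q → f p < f q

/-- `σ` factors `(P, W)`: `σ(∅) = ∅` and `σ` preserves the Brouwer–Kleene order. -/
def Factors (P W : Set (List ℕ)) (σ : List ℕ → List ℕ) : Prop :=
  σ [] = [] ∧ (∀ p ∈ P, σ p ∈ insert ([] : List ℕ) W) ∧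
  ∀ s ∈ insert ([] : List ℕ) P, ∀ t ∈ insert ([] : List ℕ) P,
    BKlt s t → BKlt (σ s) (σ t)

/-- Partial level ≤1 tree `(P, t)`; `t = none` codes the value `-1`. -/
def IsPartialLevelLe1Tree (P : Set (List ℕ)) (t : Option (List ℕ)) : Prop :=
  P.Finite ∧ IsLevel1Tree P ∧ Regular1 P ∧
  (match t with
   | none => P.Nonempty
   | some s => s ∉ P ∧ IsLevel1Tree (insert s P) ∧ Regular1 (insert s P))

/-- The tuple coded by `f` on `P` together with the value `v` at `t` respects the
partial level ≤1 tree `(P, t)`. -/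
def RespectsP1 (P : Set (List ℕ)) (t : Option (List ℕ)) (f : List ℕ → Ordinal)
    (v : Ordinal) : Prop :=
  match t with
  | none => Respects1 P f ∧ v < Ordinal.omega0
  | some s => Respects1 P f ∧
      Respects1 (insert s P) (fun p => if p = s then v else f p)

/-- A level-2 tree of uniform cofinalities. -/
structure Level2Tree where
  dom : Set (List (List ℕ))
  tr : List (List ℕ) → Set (List ℕ)
  nd : List (List ℕ) → Option (List ℕ)
  nil_mem : [] ∈ dom
  take_mem : ∀ q ∈ dom, ∀ n : ℕ, q.take n ∈ dom
  lvl1 : ∀ q ∈ dom, IsLevel1Tree {a : List ℕ | q ++ [a] ∈ dom}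
  tr_nil : tr [] = ∅
  nd_nil : nd [] = some [0]
  ptree : ∀ q ∈ dom, IsPartialLevelLe1Tree (tr q) (nd q)
  compl : ∀ q ∈ dom, ∀ l : ℕ, l < q.length →
    ∃ s : List ℕ, nd (q.take l) = some s ∧ tr (q.take (l + 1)) = insert s (tr (q.take l))

/-- The node `Q_node(q)`, read as an element of `ℕ^{<ω}`. -/
def Level2Tree.ndVal (Q : Level2Tree) (q : List (List ℕ)) : List ℕ := (Q.nd q).getD []

/-- The interleaved sequence `ᾱ ⊕ q`. -/
def Level2Tree.oplus (Q : Level2Tree) (f : List ℕ → Ordinal) (q : List (List ℕ)) :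
    List (Ordinal × Option (List ℕ)) :=
  (List.range q.length).map fun i => (f (Q.ndVal (q.take i)), some (q.getD i []))

/-- The interleaved sequence `ᾱ ⊕ q⌢(-1)`, where `v` is the entry of the tuple at
the node `Q_node(q)`. -/
def Level2Tree.oplusNeg (Q : Level2Tree) (f : List ℕ → Ordinal) (v : Ordinal)
    (q : List (List ℕ)) : List (Ordinal × Option (List ℕ)) :=
  Q.oplus f q ++ [(v, none)]

def optNodeLt : Option (List ℕ) → Option (List ℕ) → Prop
  | none, some _ => True
  | some s, some t => BKlt s t
  | _, _ => False

def entryLt (x y : Ordinal × Option (List ℕ)) : Prop :=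
  x.1 < y.1 ∨ (x.1 = y.1 ∧ optNodeLt x.2 y.2)

/-- The order `<^{²Q}` on interleaved sequences. -/
def Rep2lt : List (Ordinal × Option (List ℕ)) → List (Ordinal × Option (List ℕ)) → Prop :=
  BKltBy entryLt

/-- `rep(²Q)`. -/
def Level2Tree.rep (Q : Level2Tree) : Set (List (Ordinal × Option (List ℕ))) :=
  {x | (∃ q ∈ Q.dom, ∃ f, Respects1 (Q.tr q) f ∧ x = Q.oplus f q) ∨
       (∃ q ∈ Q.dom, ∃ f v, RespectsP1 (Q.tr q) (Q.nd q) f v ∧ x = Q.oplusNeg f v q)}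

/-- Π¹₂-wellfoundedness of a level-2 tree. -/
def Level2Tree.Pi12WF (Q : Level2Tree) : Prop :=
  (∀ q ∈ Q.dom, Pi11WF {a : List ℕ | q ++ [a] ∈ Q.dom}) ∧
  ∀ y : ℕ → List ℕ, (∀ n : ℕ, (List.ofFn fun i : Fin n => y i) ∈ Q.dom) →
    ¬ Pi11WF (⋃ n : ℕ, Q.tr (List.ofFn fun i : Fin n => y i))

/-- The type of elements of `rep(Q)` for a level ≤2 tree `Q`: `inl` for the level-1
part, `inr` for the level-2 part. -/
abbrev RepLe2Elt := (List ℕ × Option ℕ) ⊕ (List (Ordinal × Option (List ℕ)))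

/-- `rep(Q)` for the level ≤2 tree `Q = (P, Q₂)`. -/
def RepLe2 (P : Set (List ℕ)) (Q : Level2Tree) : Set RepLe2Elt :=
  {x | match x with
       | Sum.inl a => a ∈ Rep1 P
       | Sum.inr b => b ∈ Q.rep}

/-- The order `<^Q` for a level ≤2 tree: the level-1 part comes first. -/
def RepLe2lt : RepLe2Elt → RepLe2Elt → Prop := Sum.Lex Rep1lt Rep2lt

/-- Π¹₂-wellfoundedness of a level ≤2 tree. -/
def Pi12WFle2 (P : Set (List ℕ)) (Q : Level2Tree) : Prop :=
  Pi11WF P ∧ Q.Pi12WF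

/-- The sequence of the first `n` values of `x`. -/
def prefixSeq {α : Type*} (x : ℕ → α) (n : ℕ) : List α := List.ofFn fun i : Fin n => x i

/-- `σ` is a winning strategy for Player I (who plays at even rounds) in the game
with payoff set `A`. -/
def WinningStratI (A : Set (ℕ → ℕ)) (σ : List ℕ → ℕ) : Prop :=
  ∀ x : ℕ → ℕ, (∀ n, x (2 * n) = σ (prefixSeq x (2 * n))) → x ∈ A

/-- `σ` is a winning strategy for Player II (who plays at odd rounds). -/
def WinningStratII (A : Set (ℕ → ℕ)) (σ : List ℕ → ℕ) : Prop :=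
  ∀ x : ℕ → ℕ, (∀ n, x (2 * n + 1) = σ (prefixSeq x (2 * n + 1))) → x ∉ A

/-- The Gale–Stewart game with payoff `A` is determined. -/
def GameDetermined (A : Set (ℕ → ℕ)) : Prop :=
  (∃ σ, WinningStratI A σ) ∨ (∃ σ, WinningStratII A σ)

/-- `A` is analytic: the projection of a closed subset of the plane of Baire space,
i.e., the projection of the set of branches of a set of pairs of finite sequences. -/
def IsAnalytic (A : Set (ℕ → ℕ)) : Prop :=
  ∃ T : Set (List ℕ × List ℕ),
    A = {x | ∃ y : ℕ → ℕ, ∀ n : ℕ, (prefixSeq x n, prefixSeq y n) ∈ T}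

/-- Boldface Π¹₁-determinacy: every game with coanalytic payoff is determined. -/
def BoldfacePi11Determinacy : Prop :=
  ∀ A : Set (ℕ → ℕ), IsAnalytic Aᶜ → GameDetermined A

/-- An infinite level-1 tower. -/
def IsInfLevel1Tower (P : ℕ → Set (List ℕ)) : Prop :=
  ∀ i : ℕ, IsLevel1Tree (P i) ∧ (P i).Finite ∧ (P i).ncard = i ∧
    ∀ j : ℕ, i < j → P i ⊆ P j

/-- `o` is a limit point of the set of ordinals `E`. -/
def IsLimitPtOf (E : Set Ordinal) (o : Ordinal) : Prop :=
  (∃ e ∈ E, e < o) ∧ ∀ b < o, ∃ e ∈ E, b < e ∧ e < o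

/-- `E` is a club in `ω₁`. -/
def IsClubInOmega1 (E : Set Ordinal) : Prop :=
  (∀ o ∈ E, o < omega1) ∧
  (∀ o < omega1, ∃ e ∈ E, o < e) ∧
  ∀ o < omega1, IsLimitPtOf E o → o ∈ E

/-- The tuple coded by `f` lies in `[E]^{P↑}`. -/
def RespectsIn (E : Set Ordinal) (P : Set (List ℕ)) (f : List ℕ → Ordinal) : Prop :=
  Respects1 P f ∧ ∀ p ∈ P, f p ∈ E ∧ IsLimitPtOf E (f p)

/-- The tuple coded by `(f, v)` lies in `[E]^{(P,t)↑}`. -/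
def RespectsPIn (E : Set Ordinal) (P : Set (List ℕ)) (t : Option (List ℕ))
    (f : List ℕ → Ordinal) (v : Ordinal) : Prop :=
  RespectsP1 P t f v ∧ (∀ p ∈ P, f p ∈ E ∧ IsLimitPtOf E (f p)) ∧
  (t ≠ none → v ∈ E)

/-- `rep(²Q) ↾ E`. -/
def Level2Tree.repRestrict (Q : Level2Tree) (E : Set Ordinal) :
    Set (List (Ordinal × Option (List ℕ))) :=
  {x | (∃ q ∈ Q.dom, ∃ f, RespectsIn E (Q.tr q) f ∧ x = Q.oplus f q) ∨
       (∃ q ∈ Q.dom, ∃ f v, RespectsPIn E (Q.tr q) (Q.nd q) f v ∧ x = Q.oplusNeg f v q)}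

/-- `rep(Q) ↾ E` for a level ≤2 tree `Q = (P, Q₂)`. -/
def RepLe2Restrict (P : Set (List ℕ)) (Q : Level2Tree) (E : Set Ordinal) :
    Set RepLe2Elt :=
  {x | match x with
       | Sum.inl a => a ∈ Rep1 P
       | Sum.inr b => b ∈ Q.repRestrict E}

/-- `C` is a closed subset of `X` in the order topology of the strict linear order
`lt` on `X`: `C` contains all of its one-sided limit points in `X`. -/
def OrderClosedIn {σ : Type*} (lt : σ → σ → Prop) (X C : Set σ) : Prop :=
  (∀ v ∈ X, (∃ w ∈ C, lt w v) →
      (∀ w ∈ X, lt w v → ∃ u ∈ C, lt w u ∧ lt u v) → v ∈ C) ∧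
  (∀ v ∈ X, (∃ w ∈ C, lt v w) →
      (∀ w ∈ X, lt v w → ∃ u ∈ C, lt v u ∧ lt u w) → v ∈ C)

end


/-!
A Brouwer–Kleene-descending sequence `t₀ >_BK t₁ >_BK ⋯` has non-increasing first entries
(from `t₁` on), so they are eventually constant, say equal to `a`, and from then on the tails
are again `<_BK`-descending. Iterating produces `x ∈ ℕ^ℕ` each of whose initial segments is an
initial segment of some `tₘ`; in a level-1 tree this is an infinite branch. Conversely a branch
`x` gives the descending sequence `x↾1 >_BK x↾2 >_BK ⋯`. So `<_BK` on `P` is wellfounded iff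
`P` is Π¹₁-wellfounded, and so is `<^P`, the lexicographic product of `(P, <_BK)` with `ω + 1`.
In the wellfounded case `<^P` is a countable well-order and its rank function is order
preserving, continuous (at a point without immediate predecessor the rank is not a successor)
and bounded by `ω₁`; an order preserving map into the ordinals forces wellfoundedness.
-/

open OrderDual
open scoped Function

universe u w

section RankOn

variable {β : Type u} (r : β → β → Prop) (S : Set β) [IsWellOrder S (Subrel r (· ∈ S))]

open Classical in
noncomputable def rankOn (v : β) : Ordinal.{max u w} :=
  if h : v ∈ S then Ordinal.lift.{w} (Ordinal.typein (Subrel r (· ∈ S)) ⟨v, h⟩) else 0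

variable {r S}

theorem rankOn_of_mem {v : β} (hv : v ∈ S) :
    rankOn.{u, w} r S v = Ordinal.lift.{w} (Ordinal.typein (Subrel r (· ∈ S)) ⟨v, hv⟩) :=
  dif_pos hv

theorem rankOn_lt_rankOn {v x : β} (hv : v ∈ S) (hx : x ∈ S) (h : r v x) :
    rankOn.{u, w} r S v < rankOn r S x := by
  rw [rankOn_of_mem hv, rankOn_of_mem hx, Ordinal.lift_lt]
  exact (Ordinal.typein_lt_typein _).2 h

theorem rankOn_lt_omega1 (hS : S.Countable) {v : β} (hv : v ∈ S) :
    rankOn.{u, w} r S v < omega1 := by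
  rw [rankOn_of_mem hv]
  refine (Ordinal.lift_lt.2 (Ordinal.typein_lt_type _ _)).trans ?_
  rw [omega1, Cardinal.lt_ord, ← Ordinal.lift_card, Ordinal.card_type]
  calc Cardinal.lift.{w} (Cardinal.mk S) ≤ Cardinal.aleph0 :=
        Cardinal.lift_le_aleph0.2 (Cardinal.mk_le_aleph0_iff.2 hS.to_subtype)
    _ < Cardinal.aleph 1 := Cardinal.aleph0_lt_aleph_one

theorem image_rankOn_setOf_rel {v : β} (hv : v ∈ S) :
    rankOn.{u, w} r S '' {x ∈ S | r x v} = Set.Iio (rankOn r S v) := by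
  refine Set.Subset.antisymm
    (Set.image_subset_iff.2 fun x hx => rankOn_lt_rankOn hx.1 hv hx.2) fun o ho => ?_
  rw [Set.mem_Iio, rankOn_of_mem hv] at ho
  obtain ⟨o, rfl⟩ := Ordinal.mem_range_lift_of_le ho.le
  rw [Ordinal.lift_lt] at ho
  obtain ⟨⟨x, hx⟩, hxo⟩ := Ordinal.typein_surj _ (ho.trans (Ordinal.typein_lt_type _ _))
  refine ⟨x, ⟨hx, (Ordinal.typein_lt_typein (Subrel r (· ∈ S)) (a := ⟨x, hx⟩) (b := ⟨v, hv⟩)).1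
    (hxo ▸ ho)⟩, ?_⟩
  rw [rankOn_of_mem hx, hxo]

theorem rankOn_eq_sSup {v : β} (hv : v ∈ S)
    (hlim : ¬ ∃ x ∈ S, r x v ∧ ∀ u ∈ S, ¬ (r x u ∧ r u v)) :
    rankOn.{u, w} r S v = sSup (rankOn r S '' {x ∈ S | r x v}) := by
  rw [image_rankOn_setOf_rel hv, Order.IsSuccPrelimit.sSup_Iio]
  intro o ho
  have ho' : o ∈ rankOn r S '' {x ∈ S | r x v} := by
    rw [image_rankOn_setOf_rel hv]
    exact ho.lt
  obtain ⟨x, ⟨hx, hxv⟩, rfl⟩ := ho'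
  push Not at hlim
  obtain ⟨u, hu, hxu, huv⟩ := hlim x hx hxv
  exact ho.2 (rankOn_lt_rankOn hx hu hxu) (rankOn_lt_rankOn hu hv huv)

end RankOn

theorem bkLt_nil_left (t : List ℕ) : ¬ BKlt [] t := id

theorem bkLt_cons_cons {a b : ℕ} {s t : List ℕ} :
    BKlt (a :: s) (b :: t) ↔ a < b ∨ a = b ∧ BKlt s t := Iff.rfl

theorem ne_nil_of_bkLt {s t : List ℕ} (h : BKlt s t) : s ≠ [] := by
  rintro rfl
  exact bkLt_nil_left t h

theorem bkLt_append_left (s : List ℕ) {l : List ℕ} (hl : l ≠ []) : BKlt (s ++ l) s := by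
  induction s with
  | nil => obtain ⟨a, l, rfl⟩ := List.exists_cons_of_ne_nil hl; trivial
  | cons a s ih => exact Or.inr ⟨rfl, ih⟩

/-- `<_BK` is the reverse of the lexicographic order for the reversed order on entries. -/
def bkKey (s : List ℕ) : (List ℕᵒᵈ)ᵒᵈ := toDual (s.map toDual)

theorem bkKey_injective : Function.Injective bkKey :=
  toDual.injective.comp (List.map_injective_iff.2 toDual.injective)

theorem bkLt_iff_bkKey_lt : ∀ {s t : List ℕ}, BKlt s t ↔ bkKey s < bkKey t
  | [], t => iff_of_false (bkLt_nil_left t) List.not_lex_nil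
  | _ :: _, [] => iff_of_true trivial List.Lex.nil
  | a :: s, b :: t => by
    rw [bkLt_cons_cons, bkLt_iff_bkKey_lt]
    change _ ↔ List.Lex (· < ·) (toDual b :: t.map toDual) (toDual a :: s.map toDual)
    rw [List.cons_lex_cons_iff]
    simp [bkKey, eq_comm]

theorem IsLevel1Tree.iUnion {ι : Type*} {P : ι → Set (List ℕ)} (hP : ∀ i, IsLevel1Tree (P i)) :
    IsLevel1Tree (⋃ i, P i) := by
  refine ⟨fun s hs => ?_, fun s n hs => ?_⟩
  · obtain ⟨i, hi⟩ := Set.mem_iUnion.1 hs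
    exact (hP i).1 s hi
  · obtain ⟨i, hi⟩ := Set.mem_iUnion.1 hs
    obtain ⟨hpre, hleft⟩ := (hP i).2 s n hi
    exact ⟨fun h => Set.mem_iUnion.2 ⟨i, hpre h⟩, fun m hm => Set.mem_iUnion.2 ⟨i, hleft m hm⟩⟩

theorem IsLevel1Tree.mem_of_isPrefix {U : Set (List ℕ)} (hU : IsLevel1Tree U) {s t : List ℕ}
    (hst : s <+: t) (hs : s ≠ []) (ht : t ∈ U) : s ∈ U := by
  obtain ⟨l, rfl⟩ := hst
  induction l using List.reverseRecOn with
  | nil => simpa using ht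
  | append_singleton l a ih =>
    rw [← List.append_assoc] at ht
    exact ih ((hU.2 _ a ht).1 (by simp [hs]))

theorem exists_cons_of_bkLt_descending {t : ℕ → List ℕ} (ht : ∀ n, BKlt (t (n + 1)) (t n)) :
    ∃ (a : ℕ) (t' : ℕ → List ℕ), (∀ n, BKlt (t' (n + 1)) (t' n)) ∧ ∀ n, ∃ m, a :: t' n = t m := by
  have hcons : ∀ n, (t (n + 1)).head! :: (t (n + 1)).tail = t (n + 1) := fun n =>
    List.cons_head!_tail (ne_nil_of_bkLt (ht n))
  set h : ℕ → ℕ := fun n => (t (n + 1)).head!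
  have htail : ∀ n, BKlt (t (n + 2)) (t (n + 1)) ↔
      h (n + 1) < h n ∨ h (n + 1) = h n ∧ BKlt (t (n + 2)).tail (t (n + 1)).tail := fun n => by
    rw [← hcons n, ← hcons (n + 1)]; exact bkLt_cons_cons
  have hanti : Antitone h := antitone_nat_of_succ_le fun n => by
    rcases (htail n).1 (ht _) with hlt | ⟨heq, -⟩
    exacts [hlt.le, heq.le]
  set N := Function.argmin h
  have hconst : ∀ n, N ≤ n → h n = h N := fun n hn =>
    le_antisymm (hanti hn) (Function.argmin_le h _)
  refine ⟨h N, fun n => (t (N + n + 1)).tail, fun n => ?_, fun n => ⟨N + n + 1, ?_⟩⟩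
  · rcases (htail (N + n)).1 (ht _) with hlt | ⟨-, hlt⟩
    · rw [hconst (N + n + 1) (by omega), hconst (N + n) (by omega)] at hlt
      exact absurd hlt (lt_irrefl _)
    · exact hlt
  · rw [← hconst (N + n) (by omega)]
    exact hcons _

theorem exists_prefix_of_bkLt_descending {t : ℕ → List ℕ} (ht : ∀ n, BKlt (t (n + 1)) (t n)) :
    ∃ x : ℕ → ℕ, ∀ k, ∃ m, (List.ofFn fun i : Fin k => x i) <+: t m := by
  let D := {u : ℕ → List ℕ // ∀ n, BKlt (u (n + 1)) (u n)}
  have hstep : ∀ u : D, ∃ (a : ℕ) (u' : D), ∀ n, ∃ m, a :: u'.1 n = u.1 m := fun u => by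
    obtain ⟨a, u', hu', hcons⟩ := exists_cons_of_bkLt_descending u.2
    exact ⟨a, ⟨u', hu'⟩, hcons⟩
  choose a next hnext using hstep
  let seq : ℕ → D := fun k => next^[k] ⟨t, ht⟩
  have key : ∀ k n, ∃ m, (List.ofFn fun i : Fin k => a (seq i)) ++ (seq k).1 n = t m := by
    intro k
    induction k with
    | zero => exact fun n => ⟨n, rfl⟩
    | succ k ih =>
      intro n
      obtain ⟨m', hm'⟩ := hnext (seq k) n
      obtain ⟨m, hm⟩ := ih m'
      refine ⟨m, ?_⟩
      rw [List.ofFn_succ_last, List.append_assoc, List.singleton_append, ← hm, ← hm']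
      simp only [seq, Function.iterate_succ_apply']
      rfl
  refine ⟨fun k => a (seq k), fun k => ?_⟩
  obtain ⟨m, hm⟩ := key k 0
  exact ⟨m, _, hm⟩

theorem wellFoundedOn_bkLt_of_pi11WF {U : Set (List ℕ)} (hU : IsLevel1Tree U) (hwf : Pi11WF U) :
    U.WellFoundedOn BKlt := by
  refine wellFounded_iff_isEmpty_descending_chain.2 ⟨fun ⟨g, hg⟩ => hwf ?_⟩
  obtain ⟨x, hx⟩ := exists_prefix_of_bkLt_descending (t := fun n => (g n).1) hg
  refine ⟨x, fun k hk => ?_⟩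
  obtain ⟨m, hm⟩ := hx k
  exact hU.mem_of_isPrefix hm (List.ne_nil_of_length_pos (by simpa using hk)) (g m).2

theorem optNatLt_iff {a b : WithTop ℕ} : optNatLt a b ↔ a < b := by
  cases a <;> cases b <;> simp [optNatLt]

theorem optNatLt_wellFounded : WellFounded optNatLt :=
  Subrelation.wf (fun h => optNatLt_iff.1 h) (wellFounded_lt (α := WithTop ℕ))

/-- `<^P` is the lexicographic order on `(bkKey p, n)`, with `(p)` read as `(p, ⊤)`. -/
def repKey (v : List ℕ × Option ℕ) : Lex ((List ℕᵒᵈ)ᵒᵈ × WithTop ℕ) := toLex (bkKey v.1, v.2)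

theorem rep1lt_iff_repKey_lt {v w : List ℕ × Option ℕ} : Rep1lt v w ↔ repKey v < repKey w := by
  rw [Rep1lt, bkLt_iff_bkKey_lt, repKey, repKey, Prod.Lex.toLex_lt_toLex]
  exact or_congr Iff.rfl (and_congr bkKey_injective.eq_iff.symm optNatLt_iff)

def repKeyEmbedding : Rep1lt ↪r ((· < ·) : Lex ((List ℕᵒᵈ)ᵒᵈ × WithTop ℕ) → _ → Prop) where
  toFun := repKey
  inj' v w h := by
    obtain ⟨h1, h2⟩ := Prod.ext_iff.1 (toLex.injective h)
    exact Prod.ext (bkKey_injective h1) h2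
  map_rel_iff' := rep1lt_iff_repKey_lt.symm

instance : IsStrictTotalOrder (List ℕ × Option ℕ) Rep1lt := repKeyEmbedding.isStrictTotalOrder

theorem wellFoundedOn_rep1lt_of_bkLt {U : Set (List ℕ)} (hU : U.WellFoundedOn BKlt) :
    (Rep1 U).WellFoundedOn Rep1lt := by
  have hfst : (Rep1 U).WellFoundedOn (BKlt on Prod.fst) :=
    Set.wellFoundedOn_image.1 (hU.subset (Set.image_subset_iff.2 fun _ hv => hv))
  refine Set.WellFoundedOn.mono' (fun v _ w _ h => Prod.lex_def.2 h)
    (hfst.prod_lex_of_wellFoundedOn_fiber (rβ := optNatLt) (g := Prod.snd)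
      fun _ => optNatLt_wellFounded.onFun.wellFoundedOn)

theorem pi11WF_of_wellFoundedOn_rep1lt {U : Set (List ℕ)} (h : (Rep1 U).WellFoundedOn Rep1lt) :
    Pi11WF U := by
  rintro ⟨x, hx⟩
  let v : ℕ → Rep1 U := fun n => ⟨(List.ofFn fun i : Fin (n + 1) => x i, none), hx _ n.succ_pos⟩
  refine (wellFounded_iff_isEmpty_descending_chain.1 h).false ⟨v, fun n => Or.inl ?_⟩
  change BKlt (List.ofFn fun i : Fin (n + 2) => x i) (List.ofFn fun i : Fin (n + 1) => x i)
  rw [List.ofFn_succ_last]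
  exact bkLt_append_left _ (List.cons_ne_nil _ _)

theorem stmt7_general (P : ℕ → Set (List ℕ))
    (hT : IsInfLevel1Tower P) :
    Pi11WF (⋃ n, P n) ↔
      ∃ f : List ℕ × Option ℕ → Ordinal,
        (∀ v ∈ Rep1 (⋃ n, P n), f v < omega1) ∧
        (∀ v ∈ Rep1 (⋃ n, P n), ∀ w ∈ Rep1 (⋃ n, P n), Rep1lt v w → f v < f w) ∧
        (∀ v ∈ Rep1 (⋃ n, P n),
          (∃ w ∈ Rep1 (⋃ n, P n), Rep1lt w v) →
          (¬ ∃ w ∈ Rep1 (⋃ n, P n), Rep1lt w v ∧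
              ∀ u ∈ Rep1 (⋃ n, P n), ¬ (Rep1lt w u ∧ Rep1lt u v)) →
          f v = sSup (f '' {w ∈ Rep1 (⋃ n, P n) | Rep1lt w v})) := by
  set U := ⋃ n, P n
  have hU : IsLevel1Tree U := IsLevel1Tree.iUnion fun n => (hT n).1
  constructor
  · intro hwf
    have : IsWellOrder (Rep1 U) (Subrel Rep1lt (· ∈ Rep1 U)) :=
      { wf := wellFoundedOn_rep1lt_of_bkLt (wellFoundedOn_bkLt_of_pi11WF hU hwf) }
    exact ⟨rankOn Rep1lt (Rep1 U), fun v hv => rankOn_lt_omega1 (Set.to_countable _) hv,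
      fun v hv w hw => rankOn_lt_rankOn hv hw, fun v hv _ => rankOn_eq_sSup hv⟩
  · rintro ⟨f, -, hmono, -⟩
    refine pi11WF_of_wellFoundedOn_rep1lt
      (Subrelation.wf ?_ (InvImage.wf (fun v : Rep1 U => f v.1) Ordinal.lt_wf))
    exact fun {v w} h => hmono v v.2 w w.2 h

/-- Assume boldface Π¹₁-determinacy. Let `(P_n)` be an infinite level-1
tower and `P = ⋃ P_n`. Then `P` is Π¹₁-wellfounded iff there is an order preserving,
continuous function from `(rep(P), <^P)` into the countable ordinals. -/
theorem stmt7 (hdet : BoldfacePi11Determinacy) (P : ℕ → Set (List ℕ))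
    (hT : IsInfLevel1Tower P) :
    Pi11WF (⋃ n, P n) ↔
      ∃ f : List ℕ × Option ℕ → Ordinal,
        (∀ v ∈ Rep1 (⋃ n, P n), f v < omega1) ∧
        (∀ v ∈ Rep1 (⋃ n, P n), ∀ w ∈ Rep1 (⋃ n, P n), Rep1lt v w → f v < f w) ∧
        (∀ v ∈ Rep1 (⋃ n, P n),
          (∃ w ∈ Rep1 (⋃ n, P n), Rep1lt w v) →
          (¬ ∃ w ∈ Rep1 (⋃ n, P n), Rep1lt w v ∧
              ∀ u ∈ Rep1 (⋃ n, P n), ¬ (Rep1lt w u ∧ Rep1lt u v)) →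
          f v = sSup (f '' {w ∈ Rep1 (⋃ n, P n) | Rep1lt w v})) :=
  stmt7_general P hT
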